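/- For the ATRS R = {f → s, f ∘ (s ∘ x) → s ∘ (s ∘ (f ∘ x))}, the uncurried system U↓(R) = {f → s, f_1(x) → s_1(x), f_1(s_1(x)) → s_1(s_1(f_1(x))), f ∘ x → f_1(x), s ∘ x → s_1(x)} satisfies dh(innermost →_{U↓(R)}, f_1^n(s_1(x))) ≥ 2^n for all n ≥ 1; hence the innermost derivational complexity of U↓(R) is at least exponential, while idc_R(n) ∈ O(n). -/

import Mathlib

/-- First-order terms over a signature `F` with arity function `ar` and variables `V`. -/
inductive Term (F : Type) (ar : F → ℕ) (V : Type) : Type where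
  | var : V → Term F ar V
  | app : (f : F) → (Fin (ar f) → Term F ar V) → Term F ar V

namespace Term

variable {F V : Type} {ar : F → ℕ}

/-- Application of a substitution. -/
def subst (σ : V → Term F ar V) : Term F ar V → Term F ar V
  | .var x => σ x
  | .app f ts => .app f (fun i => (ts i).subst σ)

/-- Size of a term. -/
def size : Term F ar V → ℕ
  | .var _ => 1
  | .app _ ts => 1 + ∑ i, (ts i).size

end Term

section Rewriting

variable {F V : Type} {ar : F → ℕ}

/-- The (reflexive) subterm relation: `Subterm u t` means `u` occurs in `t`. -/
inductive Subterm : Term F ar V → Term F ar V → Prop where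
  | refl (t) : Subterm t t
  | app (f) (ts : Fin (ar f) → Term F ar V) (i) (u) :
      Subterm u (ts i) → Subterm u (.app f ts)

/-- Proper subterm: `PSub u t` means `u` is a proper subterm of `t`. -/
def PSub (u t : Term F ar V) : Prop :=
  ∃ (f : F) (ts : Fin (ar f) → Term F ar V) (i : Fin (ar f)),
    t = Term.app f ts ∧ Subterm u (ts i)

/-- One-step rewrite relation of a TRS `R`: closure of the rules under
contexts and substitutions. -/
inductive Rew (R : Set (Term F ar V × Term F ar V)) : Term F ar V → Term F ar V → Prop where
  | rule (l r : Term F ar V) (σ : V → Term F ar V) :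
      (l, r) ∈ R → Rew R (l.subst σ) (r.subst σ)
  | congr (f : F) (ts : Fin (ar f) → Term F ar V) (i : Fin (ar f)) (u : Term F ar V) :
      Rew R (ts i) u → Rew R (.app f ts) (.app f (Function.update ts i u))

/-- Many-step rewriting. -/
def RStar (R : Set (Term F ar V × Term F ar V)) : Term F ar V → Term F ar V → Prop :=
  Relation.ReflTransGen (Rew R)

/-- Normal forms. -/
def NF (R : Set (Term F ar V × Term F ar V)) (t : Term F ar V) : Prop := ∀ u, ¬ Rew R t u

/-- `t` rewrites to the normal form `u` (w.r.t. `R`). -/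
def NormTo (R : Set (Term F ar V × Term F ar V)) (t u : Term F ar V) : Prop :=
  RStar R t u ∧ NF R u

/-- Termination: the rewrite relation is well-founded. -/
def Terminating (R : Set (Term F ar V × Term F ar V)) : Prop :=
  WellFounded (fun t s => Rew R s t)

/-- Confluence. -/
def Confluent (R : Set (Term F ar V × Term F ar V)) : Prop :=
  ∀ s t u, RStar R s t → RStar R s u → ∃ v, RStar R t v ∧ RStar R u v

/-- Innermost one-step rewriting: the contracted redex has only normal
proper subterms. -/
inductive IRew (R : Set (Term F ar V × Term F ar V)) : Term F ar V → Term F ar V → Prop where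
  | rule (l r : Term F ar V) (σ : V → Term F ar V) :
      (l, r) ∈ R → (∀ u, PSub u (l.subst σ) → NF R u) →
      IRew R (l.subst σ) (r.subst σ)
  | congr (f : F) (ts : Fin (ar f) → Term F ar V) (i : Fin (ar f)) (u : Term F ar V) :
      IRew R (ts i) u → IRew R (.app f ts) (.app f (Function.update ts i u))

/-- Innermost termination. -/
def ITerminating (R : Set (Term F ar V × Term F ar V)) : Prop :=
  WellFounded (fun t s => IRew R s t)

/-- `m`-fold composition of a relation. -/
def RelPow (r : α → α → Prop) : ℕ → α → α → Prop
  | 0 => Eq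
  | n + 1 => fun a c => ∃ b, r a b ∧ RelPow r n b c

/-- Derivation height of `t` w.r.t. a relation. -/
noncomputable def dh (r : α → α → Prop) (t : α) : ℕ :=
  sSup { m | ∃ u, RelPow r m t u }

/-- Derivational complexity w.r.t. a relation, restricted to starting terms
satisfying `P`. -/
noncomputable def dcOn {F V : Type} {ar : F → ℕ}
    (r : Term F ar V → Term F ar V → Prop) (P : Term F ar V → Prop) (n : ℕ) : ℕ :=
  sSup { m | ∃ t, P t ∧ t.size ≤ n ∧ m = dh r t }

/-- `f ∈ O(g)`. -/
def BigO (f g : ℕ → ℕ) : Prop := ∃ M N : ℕ, ∀ n, f n ≤ M * g n + N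

end Rewriting
section ATRS

/-- Signature for (un)curried applicative systems: `none` is the binary
application symbol `∘`, and `some (c, i)` is the symbol `c_i` of arity `i`
(with `c_0 = c` an applicative constant). -/
abbrev USig (C : Type) := Option (C × ℕ)

/-- Arity function for `USig`. -/
def uar {C : Type} : USig C → ℕ
  | none => 2
  | some (_, i) => i

/-- Terms over the signature `USig C` (variables are natural numbers). -/
abbrev ATerm (C : Type) := Term (USig C) uar ℕ

variable {C : Type}

/-- Binary application `s ∘ t`. -/
def appT (s t : ATerm C) : ATerm C :=
  .app none (fun i => if i.1 = 0 then s else t)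

/-- The applicative constant `c` (i.e. `c_0`). -/
def constT (c : C) : ATerm C :=
  .app (some (c, 0)) (fun i => (Nat.not_lt_zero _ i.isLt).elim)

/-- Symbols of a purely applicative term: only `∘` and constants `c_0`. -/
def ApplicativeSym : USig C → Prop
  | none => True
  | some (_, i) => i = 0

/-- A term over the applicative signature (constants plus `∘`). -/
def ApplicativeT (t : ATerm C) : Prop :=
  ∀ (u : ATerm C) (f : USig C) (ts : Fin (uar f) → ATerm C),
    Subterm u t → u = Term.app f ts → ApplicativeSym f

/-- `headCount t = some (c, n)` iff `t = c ∘ t₁ ∘ ⋯ ∘ tₙ` for some terms `tᵢ`. -/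
def headCount : ATerm C → Option (C × ℕ)
  | .var _ => none
  | .app none ts => (headCount (ts ⟨0, by simp [uar]⟩)).map (fun p => (p.1, p.2 + 1))
  | .app (some (_, _ + 1)) _ => none
  | .app (some (c, 0)) _ => some (c, 0)

/-- The spine `c ∘ t₁ ∘ ⋯ ∘ tₙ` occurs as a subterm of a left- or
right-hand side of `R`. -/
def SpineIn (R : Set (ATerm C × ATerm C)) (c : C) (n : ℕ) : Prop :=
  ∃ p ∈ R, ∃ t : ATerm C, (Subterm t p.1 ∨ Subterm t p.2) ∧ headCount t = some (c, n)

/-- `aa` is the applicative-arity function of `R`: `aa c` is the maximal `n`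
such that `c ∘ t₁ ∘ ⋯ ∘ tₙ` occurs in a rule of `R` (and `0` if `c` does not
occur applied). -/
def AASpec (R : Set (ATerm C × ATerm C)) (aa : C → ℕ) : Prop :=
  ∀ c : C, (∀ n, SpineIn R c n → n ≤ aa c) ∧ (aa c = 0 ∨ SpineIn R c (aa c))

/-- A term is head variable free if no subterm is of the form `x ∘ v` with
`x` a variable. -/
def HeadVarFree (t : ATerm C) : Prop :=
  ∀ u : ATerm C, Subterm u t → ∀ (x : ℕ) (v : ATerm C), u ≠ appT (.var x) v

/-- Basic well-formedness of an applicative TRS: left-hand sides are not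
variables, right-hand side variables occur on the left, and both sides are
applicative terms. -/
def IsATRS (R : Set (ATerm C × ATerm C)) : Prop :=
  ∀ p ∈ R, (∀ x : ℕ, p.1 ≠ Term.var x) ∧
    (∀ x : ℕ, Subterm (.var x) p.2 → Subterm (.var x) p.1) ∧
    ApplicativeT p.1 ∧ ApplicativeT p.2

/-- `R` is left head variable free. -/
def LHVF (R : Set (ATerm C × ATerm C)) : Prop := ∀ p ∈ R, HeadVarFree p.1

/-- The variables `x_0, …, x_{i-1}`. -/
def uvars (i : ℕ) : Fin i → ATerm C := fun j => .var j.1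

/-- The term `f_i(x_0,…,x_{i-1})`. -/
def fiT (c : C) (i : ℕ) : ATerm C := .app (some (c, i)) (fun j => .var j.1)

/-- The uncurrying system `U`, with rules
`c_i(x_1,…,x_i) ∘ y → c_{i+1}(x_1,…,x_i,y)` for all `0 ≤ i < aa c`. -/
def USys (aa : C → ℕ) : Set (ATerm C × ATerm C) :=
  { p | ∃ (c : C) (i : ℕ), i < aa c ∧
      p = (appT (fiT c i) (.var i), fiT c (i + 1)) }

/-- The currying system `C(F)` (for a signature with arities `arF`), with
rules `f_{i+1}(x_1,…,x_i,y) → f_i(x_1,…,x_i) ∘ y` for all `0 ≤ i < arF f`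
(where `f_{arF f}` plays the role of `f`). -/
def CurrySys {F : Type} (arF : F → ℕ) : Set (ATerm F × ATerm F) :=
  { p | ∃ (f : F) (i : ℕ), i < arF f ∧
      p = (fiT f (i + 1), appT (fiT f i) (.var i)) }

/-- The η-saturation `R_η` of `R` (w.r.t. applicative arities `aa`). -/
inductive Eta (aa : C → ℕ) (R : Set (ATerm C × ATerm C)) : ATerm C × ATerm C → Prop where
  | base (p) : p ∈ R → Eta aa R p
  | eta (l r : ATerm C) (c : C) (n x : ℕ) :
      Eta aa R (l, r) → headCount l = some (c, n) → n < aa c →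
      ¬ Subterm (.var x) l → ¬ Subterm (.var x) r →
      Eta aa R (appT l (.var x), appT r (.var x))

/-- The uncurried system `R_η↓`: the rules of `R_η` with both sides in
`U`-normal form. -/
def EtaDown (aa : C → ℕ) (R : Set (ATerm C × ATerm C)) : Set (ATerm C × ATerm C) :=
  { p | ∃ l r : ATerm C, Eta aa R (l, r) ∧
      NormTo (USys aa) l p.1 ∧ NormTo (USys aa) r p.2 }

/-- The transformed system `U↓(R) = R_η↓ ∪ U(R)`. -/
def UD (aa : C → ℕ) (R : Set (ATerm C × ATerm C)) : Set (ATerm C × ATerm C) :=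
  EtaDown aa R ∪ USys aa

/-- Symbols of the signature of `U↓(R)`: `∘` and `c_i` with `i ≤ aa c`. -/
def GoodSym (aa : C → ℕ) : USig C → Prop
  | none => True
  | some (c, i) => i ≤ aa c

/-- A term over the signature of `U↓(R)`. -/
def GoodTerm (aa : C → ℕ) (t : ATerm C) : Prop :=
  ∀ (u : ATerm C) (f : USig C) (ts : Fin (uar f) → ATerm C),
    Subterm u t → u = Term.app f ts → GoodSym aa f

/-- `C'`: curry a term over the signature of `U↓(R)` and identify all
symbols `c_i` originating from the same constant `c`. -/
def curryId : ATerm C → ATerm C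
  | .var x => .var x
  | .app none ts => appT (curryId (ts ⟨0, by simp [uar]⟩)) (curryId (ts ⟨1, by simp [uar]⟩))
  | .app (some (c, i)) ts =>
      (List.ofFn (fun j : Fin (uar (some (c, i))) => curryId (ts j))).foldl appT (constT c)

end ATRS

/-- The constants of the concrete example. -/
inductive FS : Type where
  | f : FS
  | s : FS

/-- The constant `f`. -/
def fT : ATerm FS := constT FS.f
/-- The constant `s`. -/
def sT : ATerm FS := constT FS.s
/-- The term `f₁(t)`. -/
def f1T (t : ATerm FS) : ATerm FS := Term.app (some (FS.f, 1)) (fun _ => t)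
/-- The term `s₁(t)`. -/
def s1T (t : ATerm FS) : ATerm FS := Term.app (some (FS.s, 1)) (fun _ => t)

/-- The ATRS `R = {f → s, f ∘ (s ∘ x) → s ∘ (s ∘ (f ∘ x))}`. -/
def Rfs : Set (ATerm FS × ATerm FS) :=
  {(fT, sT),
   (appT fT (appT sT (.var 0)), appT sT (appT sT (appT fT (.var 0))))}

/-- The TRS `U↓(R) = {f → s, f₁(x) → s₁(x), f₁(s₁(x)) → s₁(s₁(f₁(x))),
f ∘ x → f₁(x), s ∘ x → s₁(x)}`. -/
def UDfs : Set (ATerm FS × ATerm FS) :=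
  {(fT, sT),
   (f1T (.var 0), s1T (.var 0)),
   (f1T (s1T (.var 0)), s1T (s1T (f1T (.var 0)))),
   (appT fT (.var 0), f1T (.var 0)),
   (appT sT (.var 0), s1T (.var 0))}

/-- Applicative arities of the example: `aa f = aa s = 1`. -/
def aaFS : FS → ℕ := fun _ => 1

/-!
The interpretation `∘ ↦ (a + 3)(b + 1)`, `f ↦ 2`, `s ↦ 1`, `f₁ ↦ 3x + 3`, `s₁ ↦ x + 1` is
strictly monotone and strictly decreases along every rule of `U↓(R)`, so it bounds derivation
heights; on terms over the signature of `U↓(R)` it stays below `4 ^ |t|`, which makes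
`idc_{U↓(R)}` finite. Since `f₁(x) → s₁(x)` fires innermost on normal arguments, `f₁(s₁ᵏ(x))`
reaches `s₁²ᵏ⁺¹(x)` in `k + 1` innermost steps: each application of `f₁` doubles the tower of
`s₁`, and `f₁ⁿ(s₁(x))` admits an innermost derivation of length `2 (2ⁿ - 1)`. In `R` the rule
`f ∘ (s ∘ x) → s ∘ (s ∘ (f ∘ x))` never fires innermost, as `f` is a redex, so every innermost
step turns an `f` into `s`, and the number of `f`s, at most the size, bounds the height.
-/

namespace RelPow

variable {α β : Type*} {r : α → α → Prop}

theorem add {m k : ℕ} {a b c : α} (h₁ : RelPow r m a b) (h₂ : RelPow r k b c) :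
    RelPow r (m + k) a c := by
  induction m generalizing a with
  | zero => cases h₁; simpa using h₂
  | succ m ih =>
    obtain ⟨d, had, hdb⟩ := h₁
    rw [Nat.add_right_comm]
    exact ⟨d, had, ih hdb⟩

theorem map {r' : β → β → Prop} {g : α → β} (hg : ∀ a b, r a b → r' (g a) (g b))
    {m : ℕ} {a b : α} (h : RelPow r m a b) : RelPow r' m (g a) (g b) := by
  induction m generalizing a with
  | zero => cases h; rfl
  | succ m ih =>
    obtain ⟨d, had, hdb⟩ := h
    exact ⟨g d, hg _ _ had, ih hdb⟩

theorem exists_of_le {m k : ℕ} {a b : α} (h : RelPow r m a b) (hk : k ≤ m) :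
    ∃ c, RelPow r k a c := by
  induction k generalizing m a with
  | zero => exact ⟨a, rfl⟩
  | succ k ih =>
    obtain ⟨m, rfl⟩ := Nat.exists_eq_add_of_lt hk
    obtain ⟨d, had, hdb⟩ := h
    obtain ⟨c, hc⟩ := ih hdb (by omega)
    exact ⟨c, d, had, hc⟩

theorem le_of_lt_measure {g : α → ℕ} (hg : ∀ a b, r a b → g b < g a) {m : ℕ} {a b : α}
    (h : RelPow r m a b) : m ≤ g a := by
  induction m generalizing a with
  | zero => exact Nat.zero_le _
  | succ m ih =>
    obtain ⟨d, had, hdb⟩ := h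
    have := hg _ _ had
    have := ih hdb
    omega

end RelPow

section DerivationHeight

variable {α : Type*} {r : α → α → Prop} {g : α → ℕ}

theorem dh_le_of_lt_measure (hg : ∀ a b, r a b → g b < g a) (t : α) : dh r t ≤ g t :=
  csSup_le' fun _ ⟨_, hu⟩ => hu.le_of_lt_measure hg

theorem le_dh_of_lt_measure (hg : ∀ a b, r a b → g b < g a) {m : ℕ} {t u : α}
    (h : RelPow r m t u) : m ≤ dh r t :=
  le_csSup ⟨g t, fun _ ⟨_, hu⟩ => hu.le_of_lt_measure hg⟩ ⟨u, h⟩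

variable {F V : Type} {ar : F → ℕ} {r : Term F ar V → Term F ar V → Prop}
  {P : Term F ar V → Prop} {B : ℕ → ℕ}

theorem dcOn_le_of_dh_le (hB : Monotone B) (hdh : ∀ t, P t → dh r t ≤ B t.size) (n : ℕ) :
    dcOn r P n ≤ B n :=
  csSup_le' fun _ ⟨t, ht, hsize, hm⟩ => hm ▸ (hdh t ht).trans (hB hsize)

theorem dh_le_dcOn (hB : Monotone B) (hdh : ∀ t, P t → dh r t ≤ B t.size) {t : Term F ar V}
    {n : ℕ} (ht : P t) (hsize : t.size ≤ n) : dh r t ≤ dcOn r P n :=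
  le_csSup ⟨B n, fun _ ⟨s, hs, hsize, hm⟩ => hm ▸ (hdh s hs).trans (hB hsize)⟩
    ⟨t, ht, hsize, rfl⟩

end DerivationHeight

section TermRewriting

variable {F V : Type} {ar : F → ℕ} {R : Set (Term F ar V × Term F ar V)}

theorem IRew.toRew {t u : Term F ar V} (h : IRew R t u) : Rew R t u := by
  induction h with
  | rule l r σ hlr _ => exact .rule l r σ hlr
  | congr f ts i u _ ih => exact .congr f ts i u ih

theorem NF.of_subterm {t u : Term F ar V} (ht : NF R t) (hu : Subterm u t) : NF R u := by
  induction hu with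
  | refl => exact ht
  | app f ts i u _ ih =>
    intro u' hu'
    exact ih (fun v hv => ht _ (.congr f ts i v hv)) u' hu'

theorem NF.app {f : F} {ts : Fin (ar f) → Term F ar V}
    (hroot : ∀ p ∈ R, ∀ σ, p.1.subst σ ≠ .app f ts) (hargs : ∀ i, NF R (ts i)) :
    NF R (.app f ts) := by
  intro u h
  generalize hs : Term.app f ts = s at h
  cases h with
  | rule l r σ hlr => exact hroot _ hlr σ hs.symm
  | congr g us i v hv => cases hs; exact hargs i v hv

theorem NF.var (hR : ∀ p ∈ R, ∀ y, p.1 ≠ .var y) (x : V) : NF R (.var x) := by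
  intro u h
  generalize hs : Term.var x = s at h
  cases h with
  | rule l r σ hlr =>
    cases l with
    | var y => exact hR _ hlr y rfl
    | app f ts => cases hs
  | congr => cases hs

end TermRewriting

namespace Term

variable {F V : Type} {ar : F → ℕ}

def eval (I : (f : F) → (Fin (ar f) → ℕ) → ℕ) (ρ : V → ℕ) : Term F ar V → ℕ
  | .var x => ρ x
  | .app f ts => I f fun i => (ts i).eval I ρ

variable {I : (f : F) → (Fin (ar f) → ℕ) → ℕ}

theorem eval_subst (ρ : V → ℕ) (σ : V → Term F ar V) (t : Term F ar V) :
    (t.subst σ).eval I ρ = t.eval I fun x => (σ x).eval I ρ := by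
  induction t with
  | var x => rfl
  | app f ts ih => simp only [subst, eval, ih]

theorem eval_lt_of_rew {R : Set (Term F ar V × Term F ar V)} (hI : ∀ f, StrictMono (I f))
    (hR : ∀ p ∈ R, ∀ ρ, p.2.eval I ρ < p.1.eval I ρ) (ρ : V → ℕ) {t u : Term F ar V}
    (h : Rew R t u) : u.eval I ρ < t.eval I ρ := by
  induction h with
  | rule l r σ hlr => simpa only [eval_subst] using hR _ hlr _
  | congr f ts i u _ ih =>
    simp only [eval, Function.apply_update (fun _ t => eval I ρ t)]
    exact hI f (update_lt_self_iff.mpr ih)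

theorem eval_le_size {ρ : V → ℕ} (hρ : ∀ x, ρ x ≤ 1) (hI : ∀ f v, I f v ≤ 1 + ∑ i, v i)
    (t : Term F ar V) : t.eval I ρ ≤ t.size := by
  induction t with
  | var x => exact hρ x
  | app f ts ih => exact (hI f _).trans (by simp only [size]; gcongr with i; exact ih i)

theorem eval_lt_pow_size {P : F → Prop} {B : ℕ} {ρ : V → ℕ} (hρ : ∀ x, ρ x < B)
    (hI : ∀ f, P f → ∀ v, I f v + 1 ≤ B * ∏ i, (v i + 1)) {t : Term F ar V}
    (ht : ∀ u f ts, Subterm u t → u = .app f ts → P f) : t.eval I ρ < B ^ t.size := by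
  induction t with
  | var x => simpa [size, eval] using hρ x
  | app f ts ih =>
    have hargs : ∀ i, (ts i).eval I ρ + 1 ≤ B ^ (ts i).size := fun i =>
      ih i fun u g us hu => ht u g us (.app f ts i u hu)
    calc eval I ρ (.app f ts) + 1 ≤ B * ∏ i, ((ts i).eval I ρ + 1) :=
          hI f (ht _ f ts (.refl _) rfl) _
      _ ≤ B * ∏ i, B ^ (ts i).size := by gcongr with i; exact hargs i
      _ = B ^ (app f ts).size := by
          rw [Finset.prod_pow_eq_pow_sum, size, pow_add, pow_one]

end Term

section Applicative

variable {C : Type}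

theorem appT_subst (σ : ℕ → ATerm C) (a b : ATerm C) :
    (appT a b).subst σ = appT (a.subst σ) (b.subst σ) := by
  simp only [appT, Term.subst]
  congr 1
  funext i
  split_ifs <;> rfl

theorem constT_subst (σ : ℕ → ATerm C) (c : C) : (constT c).subst σ = constT c := by
  simp only [constT, Term.subst]
  congr 1
  funext i
  exact i.elim0

theorem psub_appT_left (a b : ATerm C) : PSub a (appT a b) :=
  ⟨none, _, ⟨0, two_pos⟩, rfl, .refl a⟩

theorem subterm_of_psub_unary {c : C} {t u : ATerm C}
    (h : PSub u (.app (some (c, 1)) fun _ => t)) : Subterm u t := by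
  obtain ⟨f, ts, i, hts, hu⟩ := h
  cases hts
  exact hu

theorem IRew.unary {R : Set (ATerm C × ATerm C)} (c : C) {a b : ATerm C} (h : IRew R a b) :
    IRew R (.app (some (c, 1)) fun _ => a) (.app (some (c, 1)) fun _ => b) := by
  have hupd : Function.update (fun _ => a) ⟨0, one_pos⟩ b =
      fun _ : Fin (uar (some (c, 1))) => b := by
    funext j
    rw [show j = ⟨0, one_pos⟩ from Fin.ext (Nat.lt_one_iff.mp j.isLt), Function.update_self]
  simpa only [hupd] using IRew.congr (some (c, 1)) (fun _ => a) ⟨0, one_pos⟩ b h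

theorem goodTerm_var (aa : C → ℕ) (x : ℕ) : GoodTerm aa (.var x) := by
  intro u f ts hu hts
  cases hu
  cases hts

theorem goodTerm_app {aa : C → ℕ} {f : USig C} {ts : Fin (uar f) → ATerm C}
    (hf : GoodSym aa f) (hts : ∀ i, GoodTerm aa (ts i)) : GoodTerm aa (.app f ts) := by
  intro u g us hu hus
  cases hu with
  | refl => cases hus; exact hf
  | app _ _ i _ hu => exact hts i u g us hu hus

end Applicative

theorem size_f1T (t : ATerm FS) : (f1T t).size = t.size + 1 := by
  show 1 + ∑ _i : Fin 1, t.size = _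
  simp [add_comm]

theorem size_s1T (t : ATerm FS) : (s1T t).size = t.size + 1 := by
  show 1 + ∑ _i : Fin 1, t.size = _
  simp [add_comm]

theorem goodTerm_f1T_iterate_s1T (n : ℕ) : GoodTerm aaFS (f1T^[n] (s1T (.var 0))) := by
  induction n with
  | zero => exact goodTerm_app (by simp [GoodSym, aaFS]) fun _ => goodTerm_var _ _
  | succ n ih =>
    rw [Function.iterate_succ_apply']
    exact goodTerm_app (by simp [GoodSym, aaFS]) fun _ => ih

theorem size_f1T_iterate_s1T (n : ℕ) : (f1T^[n] (s1T (.var 0))).size = n + 2 := by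
  induction n with
  | zero => simp [size_s1T, Term.size]
  | succ n ih => rw [Function.iterate_succ_apply', size_f1T, ih]

theorem nf_UDfs_var (x : ℕ) : NF UDfs (.var x) := by
  refine NF.var (fun p hp y hpy => ?_) x
  simp only [UDfs, Set.mem_insert_iff, Set.mem_singleton_iff] at hp
  rcases hp with rfl | rfl | rfl | rfl | rfl <;> cases hpy

theorem nf_s1T {t : ATerm FS} (ht : NF UDfs t) : NF UDfs (s1T t) := by
  refine NF.app (fun p hp σ => ?_) fun _ => ht
  simp only [UDfs, Set.mem_insert_iff, Set.mem_singleton_iff] at hp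
  rcases hp with rfl | rfl | rfl | rfl | rfl <;>
    simp [fT, sT, f1T, appT, constT, Term.subst]

theorem nf_s1T_iterate {t : ATerm FS} (ht : NF UDfs t) (k : ℕ) : NF UDfs (s1T^[k] t) := by
  induction k with
  | zero => exact ht
  | succ k ih => rw [Function.iterate_succ_apply']; exact nf_s1T ih

theorem irew_f1T {t : ATerm FS} (ht : NF UDfs t) : IRew UDfs (f1T t) (s1T t) :=
  IRew.rule (f1T (.var 0)) (s1T (.var 0)) (fun _ => t) (by simp [UDfs])
    fun _ hu => ht.of_subterm (subterm_of_psub_unary hu)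

theorem irew_f1T_s1T {t : ATerm FS} (ht : NF UDfs t) :
    IRew UDfs (f1T (s1T t)) (s1T (s1T (f1T t))) :=
  IRew.rule (f1T (s1T (.var 0))) (s1T (s1T (f1T (.var 0)))) (fun _ => t) (by simp [UDfs])
    fun _ hu => (nf_s1T ht).of_subterm (subterm_of_psub_unary hu)

theorem relPow_f1T_s1T_iterate {x : ATerm FS} (hx : NF UDfs x) (k : ℕ) :
    RelPow (IRew UDfs) (k + 1) (f1T (s1T^[k] x)) (s1T^[2 * k + 1] x) := by
  induction k with
  | zero => exact ⟨s1T x, irew_f1T hx, rfl⟩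
  | succ k ih =>
    rw [Function.iterate_succ_apply', show 2 * (k + 1) + 1 = 2 * k + 1 + 1 + 1 by ring,
      Function.iterate_succ_apply', Function.iterate_succ_apply']
    exact ⟨_, irew_f1T_s1T (nf_s1T_iterate hx k),
      ih.map fun _ _ h => (h.unary FS.s).unary FS.s⟩

theorem IRew.f1T_iterate {R : Set (ATerm FS × ATerm FS)} {a b : ATerm FS} (h : IRew R a b)
    (n : ℕ) : IRew R (f1T^[n] a) (f1T^[n] b) := by
  induction n with
  | zero => exact h
  | succ n ih =>
    rw [Function.iterate_succ_apply', Function.iterate_succ_apply']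
    exact ih.unary FS.f

theorem relPow_f1T_iterate {x : ATerm FS} (hx : NF UDfs x) (n k : ℕ) :
    RelPow (IRew UDfs) ((2 ^ n - 1) * (k + 1)) (f1T^[n] (s1T^[k] x))
      (s1T^[2 ^ n * (k + 1) - 1] x) := by
  induction n generalizing k with
  | zero =>
    simp only [pow_zero, tsub_self, zero_mul, Function.iterate_zero, id_eq, one_mul,
      add_tsub_cancel_right]
    rfl
  | succ n ih =>
    obtain ⟨N, hN⟩ := Nat.exists_eq_add_of_le' (Nat.one_le_two_pow (n := n))
    have hlen : (2 ^ (n + 1) - 1) * (k + 1) = (k + 1) + (2 ^ n - 1) * (2 * k + 1 + 1) := by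
      rw [pow_succ, hN, Nat.add_sub_cancel, show (N + 1) * 2 - 1 = 2 * N + 1 by omega]
      ring
    have hend : 2 ^ (n + 1) * (k + 1) - 1 = 2 ^ n * (2 * k + 1 + 1) - 1 := by
      rw [pow_succ]; ring_nf
    rw [hlen, hend, Function.iterate_succ_apply]
    exact ((relPow_f1T_s1T_iterate hx k).map fun _ _ h => h.f1T_iterate n).add (ih (2 * k + 1))

section Interpretation

open Term

def udfsInterp : (f : USig FS) → (Fin (uar f) → ℕ) → ℕ
  | none, v => (v ⟨0, two_pos⟩ + 3) * (v ⟨1, one_lt_two⟩ + 1)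
  | some (.f, 0), _ => 2
  | some (.s, 0), _ => 1
  | some (.f, 1), v => 3 * v ⟨0, one_pos⟩ + 3
  | some (.s, 1), v => v ⟨0, one_pos⟩ + 1
  -- symbols outside the signature of `U↓(R)`: any strictly monotone value does
  | some (_, _ + 2), v => ∑ i, v i

theorem strictMono_udfsInterp : ∀ f, StrictMono (udfsInterp f)
  | none => fun v w hvw => by
    obtain ⟨hle, i, hlt⟩ := Pi.lt_def.mp hvw
    have h0 := hle ⟨0, two_pos⟩
    have h1 := hle ⟨1, one_lt_two⟩
    obtain ⟨_ | _ | _, hi⟩ := i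
    · exact Nat.mul_lt_mul_of_lt_of_le (by simpa using hlt) (by simpa using h1) (by omega)
    · exact Nat.mul_lt_mul_of_le_of_lt (by simpa using h0) (by simpa using hlt) (by omega)
    · exact absurd hi (by simp [uar])
  | some (.f, 0) | some (.s, 0) => fun _ _ hvw => by
    obtain ⟨-, i, -⟩ := Pi.lt_def.mp hvw
    exact i.elim0
  | some (.f, 1) | some (.s, 1) => fun v w hvw => by
    obtain ⟨-, i, hlt⟩ := Pi.lt_def.mp hvw
    rw [show i = ⟨0, one_pos⟩ from Fin.ext (Nat.lt_one_iff.mp i.isLt)] at hlt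
    simp only [udfsInterp]
    omega
  | some (_, _ + 2) => fun _ _ hvw => by
    simpa only [udfsInterp] using Fintype.sum_strictMono hvw

theorem udfsInterp_orients :
    ∀ p ∈ UDfs, ∀ ρ, p.2.eval udfsInterp ρ < p.1.eval udfsInterp ρ := by
  rintro p hp ρ
  simp only [UDfs, Set.mem_insert_iff, Set.mem_singleton_iff] at hp
  rcases hp with rfl | rfl | rfl | rfl | rfl <;>
    simp only [eval, udfsInterp, fT, sT, f1T, s1T, appT, constT, ↓reduceIte, one_ne_zero] <;>
    omega

theorem udfsInterp_add_one_le :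
    ∀ f, GoodSym aaFS f → ∀ v, udfsInterp f v + 1 ≤ 4 * ∏ i, (v i + 1)
  | none, _, v => by
    show _ ≤ 4 * ∏ i : Fin 2, (v i + 1)
    rw [Fin.prod_univ_two]
    show _ ≤ 4 * ((v ⟨0, two_pos⟩ + 1) * (v ⟨1, one_lt_two⟩ + 1))
    simp only [udfsInterp]
    nlinarith
  | some (.f, 0), _, v | some (.s, 0), _, v => by
    show _ ≤ 4 * ∏ i : Fin 0, (v i + 1)
    simp [udfsInterp]
  | some (.f, 1), _, v | some (.s, 1), _, v => by
    show _ ≤ 4 * ∏ i : Fin 1, (v i + 1)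
    rw [Fin.prod_univ_one]
    show _ ≤ 4 * (v ⟨0, one_pos⟩ + 1)
    simp only [udfsInterp]
    omega
  | some (_, _ + 2), h, _ => absurd h (by simp [GoodSym, aaFS])

theorem eval_udfsInterp_lt_of_irew {t u : ATerm FS} (h : IRew UDfs t u) :
    u.eval udfsInterp 0 < t.eval udfsInterp 0 :=
  eval_lt_of_rew strictMono_udfsInterp udfsInterp_orients 0 h.toRew

theorem dh_irew_UDfs_lt_four_pow_size {t : ATerm FS} (ht : GoodTerm aaFS t) :
    dh (IRew UDfs) t < 4 ^ t.size :=
  (dh_le_of_lt_measure (fun _ _ h => eval_udfsInterp_lt_of_irew h) t).trans_lt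
    (eval_lt_pow_size (fun _ => four_pos) udfsInterp_add_one_le ht)

end Interpretation

section Linear

open Term

theorem rew_fT_sT_of_irew_Rfs {t u : ATerm FS} (h : IRew Rfs t u) : Rew {(fT, sT)} t u := by
  induction h with
  | rule l r σ hlr hnf =>
    rcases hlr with hlr | hlr
    · cases hlr
      exact .rule fT sT σ rfl
    · cases hlr
      -- the constant `f` below the root is itself a redex
      refine absurd (hnf fT ?_) fun hfT => hfT sT ?_
      · rw [appT_subst, fT, constT_subst]
        exact psub_appT_left _ _
      · simpa only [fT, sT, constT_subst] using Rew.rule (R := Rfs) fT sT σ (.inl rfl)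
  | congr f ts i u _ ih => exact .congr f ts i u ih

def isConstF : USig FS → ℕ
  | some (.f, 0) => 1
  | _ => 0

def fCount (f : USig FS) (v : Fin (uar f) → ℕ) : ℕ :=
  isConstF f + ∑ i, v i

theorem eval_fCount_constT (ρ : ℕ → ℕ) (c : FS) :
    (constT c).eval fCount ρ = isConstF (some (c, 0)) := by
  show _ + ∑ i : Fin 0, _ = _
  simp

theorem dh_irew_Rfs_le_size (t : ATerm FS) : dh (IRew Rfs) t ≤ t.size := by
  have hmono : ∀ f, StrictMono (fCount f) := fun f =>
    Fintype.sum_strictMono.const_add _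
  have horient : ∀ p ∈ ({(fT, sT)} : Set (ATerm FS × ATerm FS)), ∀ ρ,
      p.2.eval fCount ρ < p.1.eval fCount ρ := by
    rintro _ rfl ρ
    simp [fT, sT, eval_fCount_constT, isConstF]
  have hbound : ∀ f v, fCount f v ≤ 1 + ∑ i, v i := fun f v => by
    unfold fCount isConstF
    split <;> omega
  calc dh (IRew Rfs) t ≤ t.eval fCount 0 :=
        dh_le_of_lt_measure (fun _ _ h => eval_lt_of_rew hmono horient 0
          (rew_fT_sT_of_irew_Rfs h)) t
    _ ≤ t.size := eval_le_size (fun _ => zero_le_one) hbound t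

end Linear

/-- for `R = {f → s, f ∘ (s ∘ x) → s ∘ (s ∘ (f ∘ x))}`, the
uncurried system `U↓(R)` admits innermost derivations of length `2^n` from
`f₁ⁿ(s₁(x))` for every `n ≥ 1`, hence `idc_{U↓(R)}(n + 3) ≥ 2^n`, so its
innermost derivational complexity is at least exponential, while
`idc_R(n) ∈ O(n)`. -/
theorem uncurrying_exponential_idc :
    (∀ n : ℕ, 1 ≤ n →
      ∃ u, RelPow (IRew UDfs) (2 ^ n) (f1T^[n] (s1T (.var 0))) u) ∧
    (∀ n : ℕ, 2 ^ n ≤ dcOn (IRew UDfs) (GoodTerm aaFS) (n + 3)) ∧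
    BigO (dcOn (IRew Rfs) ApplicativeT) (fun n => n) := by
  have hderiv (n : ℕ) : RelPow (IRew UDfs) ((2 ^ n - 1) * 2) (f1T^[n] (s1T (.var 0)))
      (s1T^[2 ^ n * 2 - 1] (.var 0)) :=
    relPow_f1T_iterate (nf_UDfs_var 0) n 1
  refine ⟨fun n hn => ?_, fun n => ?_, 1, 0, fun n => ?_⟩
  · have : 2 ≤ 2 ^ n := Nat.le_self_pow (by omega) 2
    exact (hderiv n).exists_of_le (by omega)
  · calc 2 ^ n ≤ (2 ^ (n + 1) - 1) * 2 := by rw [pow_succ]; omega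
      _ ≤ dh (IRew UDfs) (f1T^[n + 1] (s1T (.var 0))) :=
        le_dh_of_lt_measure (fun _ _ h => eval_udfsInterp_lt_of_irew h) (hderiv (n + 1))
      _ ≤ dcOn (IRew UDfs) (GoodTerm aaFS) (n + 3) :=
        dh_le_dcOn (B := (4 ^ ·)) (fun _ _ => Nat.pow_le_pow_right four_pos)
          (fun _ ht => (dh_irew_UDfs_lt_four_pow_size ht).le) (goodTerm_f1T_iterate_s1T _)
          (size_f1T_iterate_s1T _).le
  · simpa using dcOn_le_of_dh_le monotone_id (fun t _ => dh_irew_Rfs_le_size t) n
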